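/- Let 0 < ε < K, let g : ℝ² → ℝ be Lipschitz continuous with ε ≤ g(y,p) ≤ K for all y, p ∈ ℝ, let x₁ < x₂ be real numbers, and let h > 0 be large enough that εh ≥ x₂ − x₁. For ψ ∈ H¹(−h,0), let y_ψ be the unique solution of the ODE y′(s) = −g(y(s), ψ(−s)), y(0) = x₂, on [0,h] (which exists by Picard–Lindelöf, using the continuous representative of ψ), and let r(ψ) ∈ [0,h] be the unique time with y_ψ(r(ψ)) = x₁. Then the map r : H¹(−h,0) → [0,h] is Lipschitz continuous; indeed ε|r(φ) − r(ψ)| ≤ C‖φ − ψ‖_{L₂} ≤ C‖φ − ψ‖_{H¹} for some constant C depending only on h and the Lipschitz constant of g. -/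

import Mathlib

open MeasureTheory Set Filter

section Prelims

variable {E : Type*} [NormedAddCommGroup E] [NormedSpace ℝ E]

/-- `f` belongs to `H¹(a,b;E)` with weak derivative `f'`; `f` is identified with its
continuous representative, so that the fundamental theorem of calculus holds. -/
structure MemH1 (a b : ℝ) (f f' : ℝ → E) : Prop where
  contOn : ContinuousOn f (Set.Icc a b)
  memL2 : MeasureTheory.MemLp f 2 (MeasureTheory.volume.restrict (Set.Ioo a b))
  derivMemL2 : MeasureTheory.MemLp f' 2 (MeasureTheory.volume.restrict (Set.Ioo a b))
  ftc : ∀ t ∈ Set.Icc a b, f t = f a + ∫ s in a..t, f' s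

/-- The `H¹(a,b)`-norm of a function `f` with weak derivative `f'`. -/
noncomputable def H1norm (a b : ℝ) (f f' : ℝ → E) : ℝ :=
  Real.sqrt ((∫ t in Set.Ioo a b, ‖f t‖ ^ 2) + ∫ t in Set.Ioo a b, ‖f' t‖ ^ 2)

/-- Membership in `V_β = {ψ ∈ H¹(-h,0;E) : ‖ψ'‖_∞ ≤ β}`. -/
def VbetaMem (h β : ℝ) (ψ ψ' : ℝ → E) : Prop :=
  MemH1 (-h) 0 ψ ψ' ∧
    ∀ᵐ t ∂(MeasureTheory.volume.restrict (Set.Ioo (-h) (0 : ℝ))), ‖ψ' t‖ ≤ β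

/-- The pre-history of `x` at time `t`: `s ↦ x (t + s)`. -/
def prehist (x : ℝ → E) (t : ℝ) : ℝ → E := fun s => x (t + s)

end Prelims

/-! By Grönwall's inequality, the solutions `y_φ` and `y_ψ` stay within
`Lg e^{Lg h} ‖φ - ψ‖_{L¹}` of each other on `[0, h]`. Both decrease at rate at least `ε`, so the
times at which they reach `x₁` differ by at most that distance divided by `ε`; Cauchy–Schwarz on
an interval of length `h` turns the `L¹` norm into `√h` times the `L²` norm. -/

open Real Topology

theorem continuous_uncurry_of_abs_sub_le {g : ℝ → ℝ → ℝ} {L : ℝ} (hL : 0 ≤ L)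
    (hg : ∀ y₁ p₁ y₂ p₂, |g y₁ p₁ - g y₂ p₂| ≤ L * (|y₁ - y₂| + |p₁ - p₂|)) :
    Continuous (Function.uncurry g) := by
  refine (LipschitzWith.of_dist_le' (K := 2 * L) fun x y => ?_).continuous
  have hy : |x.1 - y.1| ≤ dist x y := by rw [Prod.dist_eq, ← Real.dist_eq]; exact le_max_left _ _
  have hp : |x.2 - y.2| ≤ dist x y := by rw [Prod.dist_eq, ← Real.dist_eq]; exact le_max_right _ _
  calc dist (Function.uncurry g x) (Function.uncurry g y) = |g x.1 x.2 - g y.1 y.2| :=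
        Real.dist_eq _ _
    _ ≤ L * (|x.1 - y.1| + |x.2 - y.2|) := hg _ _ _ _
    _ ≤ L * (dist x y + dist x y) := by gcongr
    _ = 2 * L * dist x y := by ring

theorem ContinuousOn.comp_neg_Icc {φ : ℝ → ℝ} {h : ℝ} (hφ : ContinuousOn φ (Icc (-h) 0)) :
    ContinuousOn (fun τ => φ (-τ)) (Icc 0 h) :=
  hφ.comp continuousOn_neg fun _ hτ => ⟨neg_le_neg hτ.2, neg_nonpos.2 hτ.1⟩

theorem hasDerivWithinAt_integral_Ici_of_continuousOn {u : ℝ → ℝ} {a b x : ℝ}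
    (hu : ContinuousOn u (Icc a b)) (hx : x ∈ Ico a b) :
    HasDerivWithinAt (fun s => ∫ τ in a..s, u τ) (u x) (Ici x) x := by
  have hmem : Icc a b ∈ 𝓝[>] x := Icc_mem_nhdsGT_of_mem hx
  refine intervalIntegral.integral_hasDerivWithinAt_right (t := Ioi x)
    ((hu.mono (Icc_subset_Icc_right hx.2.le)).intervalIntegrable_of_Icc hx.1) ?_
    ((hu x (Ico_subset_Icc_self hx)).mono_of_mem_nhdsWithin hmem)
  exact (hu.stronglyMeasurableAtFilter_nhdsWithin measurableSet_Icc x).filter_mono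
    (nhdsWithin_le_of_mem hmem)

theorem le_mul_exp_of_le_add_mul_integral {u : ℝ → ℝ} {a b A L : ℝ} (hL : 0 ≤ L)
    (hu : ContinuousOn u (Icc a b)) (hle : ∀ s ∈ Icc a b, u s ≤ A + L * ∫ τ in a..s, u τ) :
    ∀ s ∈ Icc a b, u s ≤ A * exp (L * (s - a)) := by
  -- `V` is the right-hand side of `hle`; it satisfies `V' = L u ≤ L V`.
  set V : ℝ → ℝ := fun s => A + L * ∫ τ in a..s, u τ
  have hVc : ContinuousOn V (Icc a b) :=
    (((intervalIntegral.continuousOn_primitive hu.integrableOn_Icc).congr fun x hx =>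
      intervalIntegral.integral_of_le hx.1).const_smul L).const_add A
  have hV : ∀ x ∈ Ico a b, HasDerivWithinAt V (L * u x) (Ici x) x := fun x hx =>
    ((hasDerivWithinAt_integral_Ici_of_continuousOn hu hx).const_mul L).const_add A
  have hVle := le_gronwallBound_of_liminf_deriv_right_le (δ := A) (K := L) (ε := 0) hVc
    (fun x hx _ hr => (hV x hx).liminf_right_slope_le hr) (by simp [V])
    (fun x hx => by simpa using mul_le_mul_of_nonneg_left (hle x (Ico_subset_Icc_self hx)) hL)
  intro s hs
  simpa [gronwallBound_ε0] using (hle s hs).trans (hVle s hs)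

theorem abs_sub_le_of_eq_sub_integral {y₁ y₂ F₁ F₂ e : ℝ → ℝ} {x₀ a b L : ℝ} (hL : 0 ≤ L)
    (hy₁c : ContinuousOn y₁ (Icc a b)) (hy₂c : ContinuousOn y₂ (Icc a b))
    (hF₁ : ContinuousOn F₁ (Icc a b)) (hF₂ : ContinuousOn F₂ (Icc a b))
    (he : ContinuousOn e (Icc a b)) (he₀ : ∀ τ ∈ Icc a b, 0 ≤ e τ)
    (hF : ∀ τ ∈ Icc a b, |F₁ τ - F₂ τ| ≤ L * |y₁ τ - y₂ τ| + e τ)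
    (hy₁ : ∀ s ∈ Icc a b, y₁ s = x₀ - ∫ τ in a..s, F₁ τ)
    (hy₂ : ∀ s ∈ Icc a b, y₂ s = x₀ - ∫ τ in a..s, F₂ τ) :
    ∀ s ∈ Icc a b, |y₁ s - y₂ s| ≤ (∫ τ in a..b, e τ) * exp (L * (b - a)) := by
  have hint : ∀ {f : ℝ → ℝ}, ContinuousOn f (Icc a b) → ∀ s ∈ Icc a b,
      IntervalIntegrable f volume a s := fun hf s hs =>
    (hf.mono (Icc_subset_Icc_right hs.2)).intervalIntegrable_of_Icc hs.1
  have hu : ContinuousOn (fun τ => |y₁ τ - y₂ τ|) (Icc a b) := (hy₁c.sub hy₂c).abs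
  have hle : ∀ s ∈ Icc a b,
      |y₁ s - y₂ s| ≤ (∫ τ in a..b, e τ) + L * ∫ τ in a..s, |y₁ τ - y₂ τ| := by
    intro s hs
    have hsub : Icc a s ⊆ Icc a b := Icc_subset_Icc_right hs.2
    calc |y₁ s - y₂ s| = |∫ τ in a..s, (F₁ τ - F₂ τ)| := by
          rw [hy₁ s hs, hy₂ s hs, intervalIntegral.integral_sub (hint hF₁ s hs) (hint hF₂ s hs),
            ← abs_neg]
          ring_nf
      _ ≤ ∫ τ in a..s, |F₁ τ - F₂ τ| := intervalIntegral.abs_integral_le_integral_abs hs.1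
      _ ≤ ∫ τ in a..s, (L * |y₁ τ - y₂ τ| + e τ) :=
          intervalIntegral.integral_mono_on hs.1 (hint (hF₁.sub hF₂).abs s hs)
            (hint ((continuousOn_const.mul hu).add he) s hs) fun τ hτ => hF τ (hsub hτ)
      _ = (∫ τ in a..s, e τ) + L * ∫ τ in a..s, |y₁ τ - y₂ τ| := by
          rw [intervalIntegral.integral_add (hint (f := fun τ => L * |y₁ τ - y₂ τ|)
            (continuousOn_const.mul hu) s hs) (hint he s hs),
            intervalIntegral.integral_const_mul, add_comm]
      _ ≤ (∫ τ in a..b, e τ) + L * ∫ τ in a..s, |y₁ τ - y₂ τ| := by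
          gcongr
          exact intervalIntegral.integral_mono_interval le_rfl hs.1 hs.2
            ((ae_restrict_mem measurableSet_Ioc).mono fun τ hτ => he₀ τ (Ioc_subset_Icc_self hτ))
            (hint he b ⟨hs.1.trans hs.2, le_rfl⟩)
  intro s hs
  have hA : 0 ≤ ∫ τ in a..b, e τ :=
    intervalIntegral.integral_nonneg (hs.1.trans hs.2) fun τ hτ => he₀ τ hτ
  calc |y₁ s - y₂ s| ≤ (∫ τ in a..b, e τ) * exp (L * (s - a)) :=
        le_mul_exp_of_le_add_mul_integral hL hu hle s hs
    _ ≤ (∫ τ in a..b, e τ) * exp (L * (b - a)) := by gcongr; exact hs.2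

theorem mul_sub_le_sub_of_eq_sub_integral {y F : ℝ → ℝ} {x₀ a b ε : ℝ}
    (hF : ContinuousOn F (Icc a b)) (hFε : ∀ τ ∈ Icc a b, ε ≤ F τ)
    (hy : ∀ s ∈ Icc a b, y s = x₀ - ∫ τ in a..s, F τ) :
    ∀ s ∈ Icc a b, ∀ t ∈ Icc a b, s ≤ t → ε * (t - s) ≤ y s - y t := by
  intro s hs t ht hst
  have hint : ∀ r ∈ Icc a b, IntervalIntegrable F volume a r := fun r hr =>
    (hF.mono (Icc_subset_Icc_right hr.2)).intervalIntegrable_of_Icc hr.1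
  calc ε * (t - s) = ∫ _ in s..t, ε := by simp [mul_comm]
    _ ≤ ∫ τ in s..t, F τ :=
        intervalIntegral.integral_mono_on hst intervalIntegrable_const
          ((hF.mono (Icc_subset_Icc hs.1 ht.2)).intervalIntegrable_of_Icc hst)
          fun τ hτ => hFε τ ⟨hs.1.trans hτ.1, hτ.2.trans ht.2⟩
    _ = y s - y t := by
        rw [hy s hs, hy t ht, ← intervalIntegral.integral_interval_sub_left (hint t ht) (hint s hs)]
        ring

theorem mul_abs_sub_le_of_decreasing_at_rate {y₁ y₂ : ℝ → ℝ} {S : Set ℝ} {ε B r₁ r₂ : ℝ}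
    (hy₁ : ∀ s ∈ S, ∀ t ∈ S, s ≤ t → ε * (t - s) ≤ y₁ s - y₁ t)
    (hy₂ : ∀ s ∈ S, ∀ t ∈ S, s ≤ t → ε * (t - s) ≤ y₂ s - y₂ t)
    (hB : ∀ s ∈ S, |y₁ s - y₂ s| ≤ B) (hr₁ : r₁ ∈ S) (hr₂ : r₂ ∈ S) (hr : y₁ r₁ = y₂ r₂) :
    ε * |r₁ - r₂| ≤ B := by
  rcases le_total r₁ r₂ with h | h
  · rw [abs_of_nonpos (sub_nonpos.2 h)]
    linarith [hy₂ r₁ hr₁ r₂ hr₂ h, hB r₁ hr₁, neg_abs_le (y₁ r₁ - y₂ r₁)]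
  · rw [abs_of_nonneg (sub_nonneg.2 h)]
    linarith [hy₁ r₂ hr₂ r₁ hr₁ h, hB r₂ hr₂, le_abs_self (y₁ r₂ - y₂ r₂)]

theorem integral_abs_le_sqrt_mul_sqrt_integral_sq {α : Type*} [MeasurableSpace α]
    {μ : Measure α} [IsFiniteMeasure μ] {f : α → ℝ} (hf : MemLp f 2 μ) :
    ∫ x, |f x| ∂μ ≤ √(μ.real univ) * √(∫ x, f x ^ 2 ∂μ) := by
  have h2 : ENNReal.ofReal 2 = 2 := by norm_num
  have hH := integral_mul_le_Lp_mul_Lq_of_nonneg (μ := μ) Real.HolderConjugate.two_two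
    (f := fun x => |f x|) (g := fun _ => (1 : ℝ)) (ae_of_all _ fun _ => abs_nonneg _)
    (ae_of_all _ fun _ => zero_le_one) (h2 ▸ hf.abs) (h2 ▸ memLp_const 1)
  simp only [mul_one, Real.one_rpow, integral_const, smul_eq_mul] at hH
  rw [Real.sqrt_eq_rpow, Real.sqrt_eq_rpow, mul_comm]
  convert hH using 3
  norm_cast
  simp [sq_abs]

theorem intervalIntegral_abs_le_sqrt_mul_sqrt_integral_sq {f : ℝ → ℝ} {a b : ℝ} (hab : a ≤ b)
    (hf : MemLp f 2 (volume.restrict (Ioo a b))) :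
    ∫ t in a..b, |f t| ≤ √(b - a) * √(∫ t in Ioo a b, f t ^ 2) := by
  rw [intervalIntegral.integral_of_le hab, integral_Ioc_eq_integral_Ioo,
    ← volume_real_Ioo_of_le hab, ← measureReal_restrict_apply_univ]
  exact integral_abs_le_sqrt_mul_sqrt_integral_sq hf

theorem sqrt_integral_norm_sq_le_H1norm {E : Type*} [NormedAddCommGroup E] [NormedSpace ℝ E]
    (a b : ℝ) (f f' : ℝ → E) : √(∫ t in Ioo a b, ‖f t‖ ^ 2) ≤ H1norm a b f f' :=
  Real.sqrt_le_sqrt (le_add_of_nonneg_right (integral_nonneg fun _ => by positivity))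

theorem stmt18_general (ε K : ℝ)
    (g : ℝ → ℝ → ℝ) (Lg : ℝ) (hLg : 0 ≤ Lg)
    (hg_lip : ∀ y₁ p₁ y₂ p₂, |g y₁ p₁ - g y₂ p₂| ≤ Lg * (|y₁ - y₂| + |p₁ - p₂|))
    (hg_bd : ∀ y p, ε ≤ g y p ∧ g y p ≤ K)
    (x₁ x₂ : ℝ) (h : ℝ) :
    ∃ C : ℝ, 0 ≤ C ∧ ∀ φ φd ψ ψd : ℝ → ℝ, MemH1 (-h) 0 φ φd → MemH1 (-h) 0 ψ ψd →
      ∀ yφ yψ : ℝ → ℝ,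
        ContinuousOn yφ (Set.Icc 0 h) →
        (∀ s ∈ Set.Icc (0 : ℝ) h, yφ s = x₂ - ∫ τ in (0 : ℝ)..s, g (yφ τ) (φ (-τ))) →
        ContinuousOn yψ (Set.Icc 0 h) →
        (∀ s ∈ Set.Icc (0 : ℝ) h, yψ s = x₂ - ∫ τ in (0 : ℝ)..s, g (yψ τ) (ψ (-τ))) →
        ∀ rφ ∈ Set.Icc (0 : ℝ) h, ∀ rψ ∈ Set.Icc (0 : ℝ) h,
          yφ rφ = x₁ → yψ rψ = x₁ →
          ε * |rφ - rψ| ≤ C * Real.sqrt (∫ t in Set.Ioo (-h) (0 : ℝ), (φ t - ψ t) ^ 2) ∧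
          C * Real.sqrt (∫ t in Set.Ioo (-h) (0 : ℝ), (φ t - ψ t) ^ 2) ≤
            C * H1norm (-h) 0 (φ - ψ) (φd - ψd) := by
  refine ⟨Lg * exp (Lg * h) * √h, by positivity, ?_⟩
  intro φ φd ψ ψd hφ hψ yφ yψ hyφc hyφ hyψc hyψ rφ hrφ rψ hrψ hvφ hvψ
  have hg := continuous_uncurry_of_abs_sub_le hLg hg_lip
  have hφ' := hφ.contOn.comp_neg_Icc
  have hψ' := hψ.contOn.comp_neg_Icc
  have hFφ : ContinuousOn (fun τ => g (yφ τ) (φ (-τ))) (Icc 0 h) :=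
    hg.comp_continuousOn (hyφc.prodMk hφ')
  have hFψ : ContinuousOn (fun τ => g (yψ τ) (ψ (-τ))) (Icc 0 h) :=
    hg.comp_continuousOn (hyψc.prodMk hψ')
  have hclose := abs_sub_le_of_eq_sub_integral hLg hyφc hyψc hFφ hFψ
    (continuousOn_const.mul (hφ'.sub hψ').abs) (fun _ _ => mul_nonneg hLg (abs_nonneg _))
    (fun _ _ => (hg_lip _ _ _ _).trans_eq (mul_add _ _ _)) hyφ hyψ
  have hL1 : ∫ τ in 0..h, Lg * |φ (-τ) - ψ (-τ)| ≤
      Lg * (√h * √(∫ t in Ioo (-h) 0, (φ t - ψ t) ^ 2)) := by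
    rw [intervalIntegral.integral_const_mul,
      intervalIntegral.integral_comp_neg (fun t => |φ t - ψ t|), neg_zero]
    gcongr
    simpa using intervalIntegral_abs_le_sqrt_mul_sqrt_integral_sq
      (by linarith [hrφ.1.trans hrφ.2]) (hφ.memL2.sub hψ.memL2)
  constructor
  · calc ε * |rφ - rψ| ≤ (∫ τ in 0..h, Lg * |φ (-τ) - ψ (-τ)|) * exp (Lg * (h - 0)) :=
          mul_abs_sub_le_of_decreasing_at_rate
            (mul_sub_le_sub_of_eq_sub_integral hFφ (fun _ _ => (hg_bd _ _).1) hyφ)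
            (mul_sub_le_sub_of_eq_sub_integral hFψ (fun _ _ => (hg_bd _ _).1) hyψ)
            hclose hrφ hrψ (hvφ.trans hvψ.symm)
      _ ≤ Lg * exp (Lg * h) * √h * √(∫ t in Ioo (-h) 0, (φ t - ψ t) ^ 2) := by
          rw [sub_zero]
          linarith [mul_le_mul_of_nonneg_right hL1 (exp_pos (Lg * h)).le]
  · gcongr
    simpa [Real.norm_eq_abs, sq_abs] using sqrt_integral_norm_sq_le_H1norm (-h) 0 (φ - ψ) (φd - ψd)

/-- **Global Lipschitz continuity of the threshold-type delay functional** (Theorem 6.2).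
Let `0 < ε < K`, `g : ℝ² → ℝ` Lipschitz with `ε ≤ g ≤ K`, `x₁ < x₂` and `εh ≥ x₂ - x₁`.
For `ψ ∈ H¹(-h,0)` let `y_ψ` solve `y' = -g(y(s), ψ(-s))`, `y(0) = x₂` and let
`r(ψ) ∈ [0,h]` be the unique time with `y_ψ(r(ψ)) = x₁`. Then there is a constant `C`
(depending only on `h` and the Lipschitz constant of `g`) with
`ε |r(φ) - r(ψ)| ≤ C ‖φ - ψ‖_{L₂} ≤ C ‖φ - ψ‖_{H¹}` for all `φ, ψ ∈ H¹(-h,0)`. -/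
theorem stmt18 (ε K : ℝ) (hε : 0 < ε) (hεK : ε < K)
    (g : ℝ → ℝ → ℝ) (Lg : ℝ) (hLg : 0 ≤ Lg)
    (hg_lip : ∀ y₁ p₁ y₂ p₂, |g y₁ p₁ - g y₂ p₂| ≤ Lg * (|y₁ - y₂| + |p₁ - p₂|))
    (hg_bd : ∀ y p, ε ≤ g y p ∧ g y p ≤ K)
    (x₁ x₂ : ℝ) (hx : x₁ < x₂) (h : ℝ) (hh : 0 < h) (hεh : x₂ - x₁ ≤ ε * h) :
    ∃ C : ℝ, 0 ≤ C ∧ ∀ φ φd ψ ψd : ℝ → ℝ, MemH1 (-h) 0 φ φd → MemH1 (-h) 0 ψ ψd →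
      ∀ yφ yψ : ℝ → ℝ,
        ContinuousOn yφ (Set.Icc 0 h) →
        (∀ s ∈ Set.Icc (0 : ℝ) h, yφ s = x₂ - ∫ τ in (0 : ℝ)..s, g (yφ τ) (φ (-τ))) →
        ContinuousOn yψ (Set.Icc 0 h) →
        (∀ s ∈ Set.Icc (0 : ℝ) h, yψ s = x₂ - ∫ τ in (0 : ℝ)..s, g (yψ τ) (ψ (-τ))) →
        ∀ rφ ∈ Set.Icc (0 : ℝ) h, ∀ rψ ∈ Set.Icc (0 : ℝ) h,
          yφ rφ = x₁ → yψ rψ = x₁ →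
          ε * |rφ - rψ| ≤ C * Real.sqrt (∫ t in Set.Ioo (-h) (0 : ℝ), (φ t - ψ t) ^ 2) ∧
          C * Real.sqrt (∫ t in Set.Ioo (-h) (0 : ℝ), (φ t - ψ t) ^ 2) ≤
            C * H1norm (-h) 0 (φ - ψ) (φd - ψd) :=
  stmt18_general ε K g Lg hLg hg_lip hg_bd x₁ x₂ h
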